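/- arXiv:2206.02200 — 2 statements merged into one kernel-verified Lean document; each statement's English description precedes it below -/
import Mathlib

section
/- Let E be a normed real vector space, f : E → ℝ, λ > 0, and let r : ℕ → E be a sequence satisfying f(r(t+1)) ≤ f(r(t)) − ‖r(t) − r(t+1)‖² for all t and ‖r(t) − r(t+1)‖ ≥ λ for all t < i (i.e., the first i steps are all genuine moves). Then i · λ² ≤ f(r(0)) − f(r(i)); equivalently, the number of iterations i before convergence satisfies i ≤ (f(r(0)) − f(r(i)))/λ². -/
/-- **Iteration bound (proof of Theorem 1).**
If `f (r (t+1)) ≤ f (r t) - ‖r t - r (t+1)‖²` for all `t` and the first `i` steps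
are all genuine moves of size at least `λ > 0`, then `i · λ² ≤ f (r 0) - f (r i)`,
i.e. the number of iterations before convergence is at most
`(f (r 0) - f (r i)) / λ²`. -/
theorem sufficient_decrease_iteration_bound {E : Type*}
    [NormedAddCommGroup E] [NormedSpace ℝ E]
    (f : E → ℝ) (r : ℕ → E) (lam : ℝ) (hlam : 0 < lam)
    (hdec : ∀ t, f (r (t + 1)) ≤ f (r t) - ‖r t - r (t + 1)‖ ^ 2)
    (i : ℕ) (hsep : ∀ t < i, lam ≤ ‖r t - r (t + 1)‖) :
    (i : ℝ) * lam ^ 2 ≤ f (r 0) - f (r i) := by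
  induction i with
  | zero => simp
  | succ n ih =>
    have h1 : (n : ℝ) * lam ^ 2 ≤ f (r 0) - f (r n) :=
      ih fun t ht => hsep t (ht.trans (Nat.lt_succ_self n))
    have h2 : lam ^ 2 ≤ ‖r n - r (n + 1)‖ ^ 2 :=
      pow_le_pow_left₀ hlam.le (hsep n (Nat.lt_succ_self n)) 2
    have h3 := hdec n
    push_cast
    nlinarith
end

section
/- Let h > 0 and s_0 > 0, and define the sequence (s_t) recursively by s_{t+1} = s_t³ / (s_t² + 2.25·h²). Then s_t → 0 as t → ∞, and the convergence is at least cubic in the sense that s_{t+1} ≤ s_t³ / (2.25·h²) for every t. -/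
/-- **Cubic convergence of the centroid standard deviation (Theorem 3(i), rate part).**
For `h > 0` and `s 0 > 0`, the recursion `s (t+1) = s t ³ / (s t ² + 2.25 h²)`
converges to `0`, and the convergence is at least cubic in the sense that
`s (t+1) ≤ s t ³ / (2.25 h²)` for every `t`. -/
theorem gridshift_std_cubic_convergence (h : ℝ) (hh : 0 < h) (s : ℕ → ℝ) (hs0 : 0 < s 0)
    (hrec : ∀ t, s (t + 1) = s t ^ 3 / (s t ^ 2 + 2.25 * h ^ 2)) :
    Filter.Tendsto s Filter.atTop (nhds 0) ∧
      ∀ t, s (t + 1) ≤ s t ^ 3 / (2.25 * h ^ 2) := by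
  set c : ℝ := 2.25 * h ^ 2 with hc
  have hcpos : 0 < c := by positivity
  have pos : ∀ t, 0 < s t := by
    intro t
    induction t with
    | zero => exact hs0
    | succ n ih =>
      rw [hrec n]
      positivity
  have hden : ∀ t, 0 < s t ^ 2 + c := fun t => by have := pos t; positivity
  -- upper bound by s 0
  have mono : ∀ t, s (t + 1) ≤ s t := by
    intro t
    rw [hrec t]
    rw [div_le_iff₀ (hden t)]
    have := pos t
    nlinarith
  have hbound : ∀ t, s t ≤ s 0 := by
    intro t
    induction t with
    | zero => exact le_refl _
    | succ n ih => exact (mono n).trans ih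
  set r : ℝ := s 0 ^ 2 / (s 0 ^ 2 + c) with hr
  have hr0 : 0 < r := by positivity
  have hr1 : r < 1 := by
    rw [hr, div_lt_one (hden 0)]; linarith
  have hstep : ∀ t, s (t + 1) ≤ r * s t := by
    intro t
    rw [hrec t]
    have h1 : s t ^ 3 / (s t ^ 2 + c) = s t * (s t ^ 2 / (s t ^ 2 + c)) := by
      field_simp
    rw [h1]
    have h2 : s t ^ 2 / (s t ^ 2 + c) ≤ r := by
      rw [div_le_div_iff₀ (hden t) (hden 0)]
      have h3 := hbound t
      have h4 := pos t
      have h5 : s t ^ 2 ≤ s 0 ^ 2 := by nlinarith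
      nlinarith [mul_le_mul_of_nonneg_left h5 hcpos.le]
    calc s t * (s t ^ 2 / (s t ^ 2 + c)) ≤ s t * r := by
          exact mul_le_mul_of_nonneg_left h2 (pos t).le
      _ = r * s t := mul_comm _ _
  have hgeo : ∀ t, s t ≤ s 0 * r ^ t := by
    intro t
    induction t with
    | zero => simp
    | succ n ih =>
      calc s (n + 1) ≤ r * s n := hstep n
        _ ≤ r * (s 0 * r ^ n) := mul_le_mul_of_nonneg_left ih hr0.le
        _ = s 0 * r ^ (n + 1) := by ring
  constructor
  · have hlim : Filter.Tendsto (fun t => s 0 * r ^ t) Filter.atTop (nhds 0) := by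
      have := tendsto_pow_atTop_nhds_zero_of_lt_one hr0.le hr1
      simpa using this.const_mul (s 0)
    exact squeeze_zero (fun t => (pos t).le) hgeo hlim
  · intro t
    rw [hrec t]
    exact div_le_div_of_nonneg_left (pow_pos (pos t) 3).le hcpos (by linarith [sq_nonneg (s t)])
end
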